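/- arXiv:1905.00815 — 3 statements merged into one kernel-verified Lean document; each statement's English description precedes it below -/
import Mathlib

section
/- Let n = p_1^{α_1} p_2^{α_2} ⋯ p_r^{α_r} be a positive integer, where the p_i are primes with 2 < p_1 < p_2 < ⋯ < p_r = p and α_i > 0 for each 1 ≤ i ≤ r. If p ≥ 37, then ψ(C_n) ≥ 37·(3/4)·(5/6)·(7/8)·(11/12)·(13/14)·(17/18)·(19/20)·(23/24)·(29/30)·(31/32)·n²/(p+1). -/
/-- `psi G` is the sum of the orders of all elements of `G`. -/
noncomputable def psi (G : Type*) [Group G] : ℕ := ∑ᶠ g : G, orderOf g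

/-- `psiC n` is the sum of the orders of all elements of the cyclic group of order `n`. -/
noncomputable def psiC (n : ℕ) : ℕ := psi (Multiplicative (ZMod n))

/-- A group is supersolvable if it admits a normal series (all terms normal in `G`)
with cyclic factors. -/
def IsSupersolvable (G : Type*) [Group G] : Prop :=
  ∃ (n : ℕ) (H : Fin (n + 1) → Subgroup G) (hnorm : ∀ i, (H i).Normal),
    H 0 = ⊥ ∧ H (Fin.last n) = ⊤ ∧
    ∀ i : Fin n, H i.castSucc ≤ H i.succ ∧
      letI := (hnorm i.castSucc).subgroupOf (H i.succ)
      IsCyclic (↥(H i.succ) ⧸ (H i.castSucc).subgroupOf (H i.succ))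

open Finset Nat ArithmeticFunction
open scoped ArithmeticFunction.zeta

/-- The sum of the orders of the elements of `C n` equals `∑_{d ∣ n} d·φ(d)`. -/
lemma psiC_eq_sum_divisors (n : ℕ) (hn : 0 < n) :
    psiC n = ∑ d ∈ n.divisors, d.totient * d := by
  haveI : NeZero n := ⟨hn.ne'⟩
  have hcard : Fintype.card (Multiplicative (ZMod n)) = n := by simp [ZMod.card]
  have hmaps : ∀ x : Multiplicative (ZMod n), x ∈ Finset.univ → orderOf x ∈ n.divisors := by
    intro x _
    refine Nat.mem_divisors.2 ⟨?_, hn.ne'⟩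
    have h := orderOf_dvd_card (x := x); rwa [hcard] at h
  rw [psiC, psi, finsum_eq_sum_of_fintype,
    ← Finset.sum_fiberwise_of_maps_to hmaps (fun g => orderOf g)]
  refine Finset.sum_congr rfl fun d hd => ?_
  have hdvd : d ∣ Fintype.card (Multiplicative (ZMod n)) := by
    rw [hcard]; exact (Nat.mem_divisors.1 hd).1
  rw [Finset.sum_congr rfl (fun x hx => (Finset.mem_filter.1 hx).2),
    Finset.sum_const, IsCyclic.card_orderOf_eq_totient hdvd, smul_eq_mul]

/-- The arithmetic function `n ↦ n·φ(n)`. -/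
private def Afun : ArithmeticFunction ℕ := ⟨fun n => n.totient * n, by simp⟩

lemma Afun_mult : Afun.IsMultiplicative := by
  constructor
  · show Nat.totient 1 * 1 = 1; simp
  · intro m n h
    show (m * n).totient * (m * n) = (m.totient * m) * (n.totient * n)
    rw [Nat.totient_mul h]; ring

lemma Gfun_eq (n : ℕ) : ∑ d ∈ n.divisors, d.totient * d = (↑ζ * Afun) n := by
  rw [zeta_mul_apply (f := Afun)]; rfl

lemma sum_pp (q : ℕ) (hq : q.Prime) (a : ℕ) :
    (q + 1) * ∑ i ∈ range (a + 1), (q ^ i).totient * q ^ i = q ^ (2 * a + 1) + 1 := by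
  induction a with
  | zero => simp
  | succ a ih =>
    rw [Finset.sum_range_succ, Nat.mul_add, ih, Nat.totient_prime_pow hq (Nat.succ_pos a)]
    obtain ⟨r, rfl⟩ : ∃ r, q = r + 1 := ⟨q - 1, by have := hq.two_le; omega⟩
    simp only [Nat.add_sub_cancel, Nat.succ_sub_one]
    ring

lemma divsum_pp (q : ℕ) (hq : q.Prime) (a : ℕ) :
    (q + 1) * ∑ d ∈ (q ^ a).divisors, d.totient * d = q ^ (2 * a + 1) + 1 := by
  rw [Nat.sum_divisors_prime_pow hq]
  exact sum_pp q hq a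

lemma divsum_pp_ge (q : ℕ) (hq : q.Prime) (a : ℕ) :
    ((q : ℚ) ^ a) ^ 2 * ((q : ℚ) / (q + 1)) ≤ (∑ d ∈ (q ^ a).divisors, d.totient * d : ℕ) := by
  have hq0 : (0:ℚ) < (q : ℚ) + 1 := by positivity
  rw [mul_div_assoc', div_le_iff₀ hq0]
  have hnat : (q ^ a) ^ 2 * q ≤ ((∑ d ∈ (q ^ a).divisors, d.totient * d) * (q + 1)) :=
    calc (q ^ a) ^ 2 * q = q ^ (2 * a + 1) := by ring
      _ ≤ q ^ (2 * a + 1) + 1 := Nat.le_succ _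
      _ = (q + 1) * ∑ d ∈ (q ^ a).divisors, d.totient * d := (divsum_pp q hq a).symm
      _ = _ := Nat.mul_comm _ _
  exact_mod_cast hnat

noncomputable def Cq : ℚ :=
  (3/4) * (5/6) * (7/8) * (11/12) * (13/14) * (17/18) * (19/20) * (23/24) * (29/30) * (31/32)

lemma Cq_pos : (0:ℚ) < Cq := by norm_num [Cq]

lemma key (N : ℕ) (hN : 37 ≤ N) :
    ∀ S : Finset ℕ, (∀ q ∈ S, q.Prime ∧ q ≠ 2 ∧ q < N) →
      (37 : ℚ) / N * Cq ≤ ∏ q ∈ S, (q : ℚ) / (q + 1) := by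
  induction N, hN using Nat.le_induction with
  | base =>
    intro S hS
    set T : Finset ℕ := {3, 5, 7, 11, 13, 17, 19, 23, 29, 31} with hT
    have hsub : S ⊆ T := by
      intro q hq
      obtain ⟨hq1, hq2, hq3⟩ := hS q hq
      have h3 : 3 ≤ q := by have := hq1.two_le; omega
      interval_cases q <;> revert hq1 <;> decide
    have h2 : (0:ℚ) ≤ ∏ q ∈ S, (q : ℚ) / (q + 1) := by positivity
    have hTS : (∏ q ∈ T, (q : ℚ) / (q + 1)) ≤ ∏ q ∈ S, (q : ℚ) / (q + 1) := by
      rw [← Finset.prod_sdiff hsub]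
      have h1 : (∏ q ∈ T \ S, (q : ℚ) / (q + 1)) ≤ 1 := by
        apply Finset.prod_le_one
        · intro i _; positivity
        · intro i _
          rw [div_le_one (by positivity)]
          linarith
      calc (∏ q ∈ T \ S, (q:ℚ)/(q+1)) * ∏ q ∈ S, (q:ℚ)/(q+1)
            ≤ 1 * ∏ q ∈ S, (q:ℚ)/(q+1) := mul_le_mul_of_nonneg_right h1 h2
        _ = _ := one_mul _
    refine le_trans ?_ hTS
    rw [hT]
    norm_num [Cq]
  | succ N hN ih =>
    intro S hS
    push_cast
    by_cases hmem : N ∈ S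
    · rw [← Finset.mul_prod_erase S (fun q => (q:ℚ)/(q+1)) hmem]
      have hih := ih (S.erase N) (by
        intro q hq
        obtain ⟨h1, h2⟩ := Finset.mem_erase.1 hq
        obtain ⟨ha, hb, hc⟩ := hS q h2
        exact ⟨ha, hb, by omega⟩)
      have hNpos : (0:ℚ) < N := by
        have : (37:ℚ) ≤ N := by exact_mod_cast hN
        linarith
      have hkey : (37:ℚ)/(N+1) * Cq = ((N:ℚ)/(N+1)) * ((37:ℚ)/N * Cq) := by
        field_simp
      rw [hkey]
      apply mul_le_mul_of_nonneg_left hih (by positivity)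
    · have hih := ih S (by
        intro q hq
        obtain ⟨ha, hb, hc⟩ := hS q hq
        have : q ≠ N := fun h => hmem (h ▸ hq)
        exact ⟨ha, hb, by omega⟩)
      refine le_trans ?_ hih
      have hNpos : (0:ℚ) < N := by
        have : (37:ℚ) ≤ N := by exact_mod_cast hN
        linarith
      gcongr
      · exact Cq_pos.le
      · norm_num

/-- If $n$ is a positive odd integer (all prime divisors exceed 2) whose largest prime
divisor $p$ satisfies $p \ge 37$, then
$\psi(C_n) \ge h'(12) \cdot n^2/(p+1)$. -/
theorem psiC_ge_of_odd_of_prime_ge_37 (n p : ℕ) (hn : 0 < n) (hodd : Odd n)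
    (hp : p.Prime) (hpn : p ∣ n) (hmax : ∀ q : ℕ, q.Prime → q ∣ n → q ≤ p)
    (hp37 : 37 ≤ p) :
    (37 * (3/4) * (5/6) * (7/8) * (11/12) * (13/14) * (17/18) * (19/20) * (23/24)
      * (29/30) * (31/32) * (n : ℚ) ^ 2 / (p + 1) : ℚ) ≤ psiC n := by
  have hn0 : n ≠ 0 := hn.ne'
  -- facts about the support of the factorization
  set S : Finset ℕ := n.factorization.support with hSdef
  have hSprime : ∀ q ∈ S, q.Prime := fun q hq =>
    Nat.prime_of_mem_primeFactors (by rwa [← Nat.support_factorization])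
  have hSdvd : ∀ q ∈ S, q ∣ n := fun q hq =>
    Nat.dvd_of_mem_primeFactors (by rwa [← Nat.support_factorization])
  have hSne2 : ∀ q ∈ S, q ≠ 2 := by
    intro q hq h2
    have := hSdvd q hq
    rw [h2] at this
    exact (Nat.not_even_iff_odd.2 hodd) (even_iff_two_dvd.2 this)
  have hSle : ∀ q ∈ S, q ≤ p := fun q hq => hmax q (hSprime q hq) (hSdvd q hq)
  have hpS : p ∈ S := by
    rw [hSdef, Nat.support_factorization]
    exact Nat.mem_primeFactors.2 ⟨hp, hpn, hn0⟩
  -- the product bound ∏_{q ∈ S} q/(q+1) ≥ 37·Cq/(p+1)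
  have hppos : (0:ℚ) < p := by
    have : (37:ℚ) ≤ p := by exact_mod_cast hp37
    linarith
  have hprodS : (37 : ℚ) * Cq / (p + 1) ≤ ∏ q ∈ S, (q : ℚ) / (q + 1) := by
    rw [← Finset.mul_prod_erase S (fun q => (q:ℚ)/(q+1)) hpS]
    have herase := key p hp37 (S.erase p) (by
      intro q hq
      obtain ⟨h1, h2⟩ := Finset.mem_erase.1 hq
      refine ⟨hSprime q h2, hSne2 q h2, ?_⟩
      have := hSle q h2
      omega)
    have hkey : (37:ℚ) * Cq / (p + 1) = ((p:ℚ)/(p+1)) * ((37:ℚ)/p * Cq) := by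
      field_simp
    rw [hkey]
    apply mul_le_mul_of_nonneg_left herase (by positivity)
  -- multiplicativity
  have hmult : ((↑ζ * Afun : ArithmeticFunction ℕ)).IsMultiplicative :=
    (isMultiplicative_zeta.natCast).mul Afun_mult
  have hfact : (↑ζ * Afun : ArithmeticFunction ℕ) n
      = ∏ q ∈ S, (↑ζ * Afun : ArithmeticFunction ℕ) (q ^ n.factorization q) := by
    rw [hmult.multiplicative_factorization _ hn0]
    rfl
  have hpsiC : (psiC n : ℚ) = ∏ q ∈ S, ((∑ d ∈ (q ^ n.factorization q).divisors,
      d.totient * d : ℕ) : ℚ) := by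
    rw [psiC_eq_sum_divisors n hn, Gfun_eq, hfact, Nat.cast_prod]
    exact Finset.prod_congr rfl fun q _ => by rw [← Gfun_eq]
  -- n as a product
  have hnprod : ((n : ℚ)) = ∏ q ∈ S, (q : ℚ) ^ n.factorization q := by
    conv_lhs => rw [← Nat.factorization_prod_pow_eq_self hn0]
    rw [Finsupp.prod]
    push_cast
    rfl
  -- the chain of inequalities
  have hstep1 : ∏ q ∈ S, ((q:ℚ) ^ n.factorization q) ^ 2 * ((q:ℚ)/(q+1))
      ≤ (psiC n : ℚ) := by
    rw [hpsiC]
    refine Finset.prod_le_prod (fun q _ => by positivity) fun q hq => ?_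
    exact divsum_pp_ge q (hSprime q hq) _
  have hsplit : ∏ q ∈ S, ((q:ℚ) ^ n.factorization q) ^ 2 * ((q:ℚ)/(q+1))
      = (n:ℚ)^2 * ∏ q ∈ S, (q:ℚ)/(q+1) := by
    rw [Finset.prod_mul_distrib, Finset.prod_pow, ← hnprod]
  have hfinal : (37:ℚ) * Cq * (n:ℚ)^2 / (p+1) ≤ (psiC n : ℚ) := by
    calc (37:ℚ) * Cq * (n:ℚ)^2 / (p+1) = (n:ℚ)^2 * ((37:ℚ) * Cq / (p+1)) := by ring
      _ ≤ (n:ℚ)^2 * ∏ q ∈ S, (q:ℚ)/(q+1) := by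
          apply mul_le_mul_of_nonneg_left hprodS (by positivity)
      _ = _ := hsplit.symm
      _ ≤ _ := hstep1
  calc (37 * (3/4) * (5/6) * (7/8) * (11/12) * (13/14) * (17/18) * (19/20) * (23/24)
      * (29/30) * (31/32) * (n : ℚ) ^ 2 / (p + 1) : ℚ)
      = (37:ℚ) * Cq * (n:ℚ)^2 / (p+1) := by rw [Cq]; ring
    _ ≤ _ := hfinal
end

section
/- Let G be a finite group of order n whose largest prime divisor p satisfies p ≥ 11, and suppose ψ(G) > (31/77)·ψ(C_n). Then G has a normal cyclic Sylow p-subgroup. -/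
open Finset ArithmeticFunction Subgroup

/-! ### Number-theoretic estimates -/

/-- Wallis-type estimate: for any finite set `S` of primes all at most `2k+3`,
`8 (∏ (q+1))² ≤ 9 (2k+4) (∏ q)²`. -/
lemma wallis_aux (k : ℕ) : ∀ S : Finset ℕ, (∀ q ∈ S, q.Prime ∧ q ≤ 2*k+3) →
    8 * (∏ q ∈ S, (q+1))^2 ≤ 9 * (2*k+4) * (∏ q ∈ S, q)^2 := by
  induction k with
  | zero =>
    intro S hS
    have hsub : S ⊆ ({2, 3} : Finset ℕ) := by
      intro q hq
      obtain ⟨hq1, hq2⟩ := hS q hq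
      have h2 := hq1.two_le
      simp only [Finset.mem_insert, Finset.mem_singleton]
      interval_cases q
      · left; rfl
      · right; rfl
    by_cases h2 : 2 ∈ S <;> by_cases h3 : 3 ∈ S
    · have : S = {2, 3} := Finset.Subset.antisymm hsub
        (Finset.insert_subset_iff.mpr ⟨h2, Finset.singleton_subset_iff.mpr h3⟩)
      subst this; decide
    · have : S = {2} := by
        apply Finset.Subset.antisymm
        · intro x hx
          rcases Finset.mem_insert.mp (hsub hx) with rfl | hx3
          · exact Finset.mem_singleton_self 2
          · rw [Finset.mem_singleton] at hx3; subst hx3; exact absurd hx h3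
        · exact Finset.singleton_subset_iff.mpr h2
      subst this; decide
    · have : S = {3} := by
        apply Finset.Subset.antisymm
        · intro x hx
          rcases Finset.mem_insert.mp (hsub hx) with rfl | hx3
          · exact absurd hx h2
          · rw [Finset.mem_singleton] at hx3; subst hx3
            exact Finset.mem_singleton_self 3
        · exact Finset.singleton_subset_iff.mpr h3
      subst this; decide
    · have : S = ∅ := by
        apply Finset.eq_empty_of_forall_notMem
        intro x hx
        rcases Finset.mem_insert.mp (hsub hx) with rfl | hx3
        · exact h2 hx
        · rw [Finset.mem_singleton] at hx3; subst hx3; exact h3 hx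
      subst this; decide
  | succ k ih =>
    intro S hS
    by_cases hmem : 2*k+5 ∈ S
    · set S' := S.erase (2*k+5) with hS'def
      have hS' : ∀ q ∈ S', q.Prime ∧ q ≤ 2*k+3 := by
        intro q hq
        have hqS := Finset.mem_of_mem_erase hq
        have hne := Finset.ne_of_mem_erase hq
        refine ⟨(hS q hqS).1, ?_⟩
        have hle : q ≤ 2*(k+1)+3 := (hS q hqS).2
        rcases Nat.lt_or_ge q (2*k+4) with h | h
        · omega
        · exfalso
          have : q = 2*k+4 := by omega
          subst this
          have := (hS _ hqS).1.even_iff.mp ⟨k+2, by ring⟩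
          omega
      have h1 := ih S' hS'
      have e1 : ∏ q ∈ S, q = (2*k+5) * ∏ q ∈ S', q := (Finset.mul_prod_erase S _ hmem).symm
      have e2 : ∏ q ∈ S, (q+1) = (2*k+6) * ∏ q ∈ S', (q+1) := by
        rw [hS'def, ← Finset.mul_prod_erase S (fun q => q + 1) hmem]
      rw [e1, e2]
      calc 8 * ((2*k+6) * ∏ q ∈ S', (q+1))^2
          = (2*k+6)^2 * (8 * (∏ q ∈ S', (q+1))^2) := by ring
        _ ≤ (2*k+6)^2 * (9 * (2*k+4) * (∏ q ∈ S', q)^2) := Nat.mul_le_mul_left _ h1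
        _ = 9*(2*k+6)*(∏ q ∈ S', q)^2*((2*k+6)*(2*k+4)) := by ring
        _ ≤ 9*(2*k+6)*(∏ q ∈ S', q)^2*((2*k+5)*(2*k+5)) :=
            Nat.mul_le_mul_left _ (by nlinarith)
        _ = 9 * (2*(k+1)+4) * ((2*k+5) * ∏ q ∈ S', q)^2 := by ring
    · have hS2 : ∀ q ∈ S, q.Prime ∧ q ≤ 2*k+3 := by
        intro q hq
        refine ⟨(hS q hq).1, ?_⟩
        have hle : q ≤ 2*(k+1)+3 := (hS q hq).2
        have hne : q ≠ 2*k+5 := fun h => hmem (h ▸ hq)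
        rcases Nat.lt_or_ge q (2*k+4) with h | h
        · omega
        · exfalso
          have : q = 2*k+4 := by omega
          subst this
          have := (hS _ hq).1.even_iff.mp ⟨k+2, by ring⟩
          omega
      calc 8 * (∏ q ∈ S, (q+1))^2 ≤ 9 * (2*k+4) * (∏ q ∈ S, q)^2 := ih S hS2
        _ ≤ 9 * (2*(k+1)+4) * (∏ q ∈ S, q)^2 := by
            apply Nat.mul_le_mul_right
            omega

/-- If all members of `S` are primes at most `p`, where `p ≥ 11` is prime, then
`77 ∏ (q+1) ≤ 31 p ∏ q`. -/
lemma prime_prod_bound {p : ℕ} (hp : p.Prime) (hp11 : 11 ≤ p) (S : Finset ℕ)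
    (hS : ∀ q ∈ S, q.Prime ∧ q ≤ p) :
    77 * ∏ q ∈ S, (q+1) ≤ 31 * (p * ∏ q ∈ S, q) := by
  obtain ⟨k, hk⟩ : ∃ k, p = 2*k+3 := by
    obtain ⟨m, hm⟩ := hp.odd_of_ne_two (by omega)
    exact ⟨m - 1, by omega⟩
  have hk4 : 4 ≤ k := by omega
  subst hk
  have h8 := wallis_aux k S hS
  have key : (77 * ∏ q ∈ S, (q+1))^2 ≤ (31 * ((2*k+3) * ∏ q ∈ S, q))^2 := by
    nlinarith [h8, Nat.zero_le ((∏ q ∈ S, q)^2)]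
  exact (Nat.pow_le_pow_iff_left (n := 2) (by norm_num)).mp key

/-! ### The sum of element orders of a cyclic group -/

/-- The arithmetic function `n ↦ ∑_{d ∣ n} d φ(d)`, which is the sum of the element
orders of a cyclic group of order `n`. -/
noncomputable def psiArith : ArithmeticFunction ℕ :=
  ArithmeticFunction.zeta * ⟨fun n => n * n.totient, by simp⟩

lemma psiArith_apply {n : ℕ} : psiArith n = ∑ d ∈ n.divisors, d * d.totient := by
  unfold psiArith
  refine ArithmeticFunction.zeta_mul_apply.trans ?_
  rfl

lemma psiArith_isMultiplicative : psiArith.IsMultiplicative := by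
  refine ArithmeticFunction.isMultiplicative_zeta.mul ⟨by simp, ?_⟩
  intro m n h
  show (m * n) * (m * n).totient = (m * m.totient) * (n * n.totient)
  rw [Nat.totient_mul h]; ring

lemma psiArith_prime_pow {q : ℕ} (hq : q.Prime) (e : ℕ) :
    q ^ (2*e+1) + 1 ≤ (q+1) * psiArith (q^e) := by
  induction e with
  | zero =>
    have h1 : psiArith 1 = 1 := psiArith_isMultiplicative.map_one
    rw [pow_zero, h1, mul_one]
    have : 2*0+1 = 1 := rfl
    rw [this, pow_one]
  | succ e ih =>
    have hsum : ∀ j : ℕ, psiArith (q^j) = ∑ i ∈ Finset.range (j+1), q^i * (q^i).totient := by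
      intro j
      rw [psiArith_apply, Nat.sum_divisors_prime_pow hq]
    have hstep : psiArith (q^(e+1)) = psiArith (q^e) + q^(e+1) * (q^(e+1)).totient := by
      rw [hsum (e+1), hsum e, Finset.sum_range_succ]
    rw [hstep]
    have htot : (q^(e+1)).totient = q^e * (q - 1) := Nat.totient_prime_pow hq (Nat.succ_pos e)
    obtain ⟨r, rfl⟩ : ∃ r, q = r + 2 := ⟨q - 2, by have := hq.two_le; omega⟩
    have h21 : r + 2 - 1 = r + 1 := by omega
    have htot' : ((r+2)^(e+1)).totient = (r+2)^e * (r+1) := by rw [htot, h21]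
    rw [htot']
    have hp1 : (r+2) ^ (2*e+1) = (r+2)^e * (r+2)^e * (r+2) := by ring
    have hp2 : (r+2) ^ (2*(e+1)+1) = (r+2)^e * (r+2)^e * (r+2) * ((r+2)*(r+2)) := by ring
    have hp3 : (r+2)^(e+1) = (r+2)^e * (r+2) := by ring
    rw [hp2, hp3]
    rw [hp1] at ih
    nlinarith [ih, Nat.zero_le ((r+2)^e * (r+2)^e)]

/-- The key estimate `77 n² ≤ 31 p ψ(C_n)` when all prime divisors of `n` are
at most `p` and `p ≥ 11` is prime. -/
lemma psiArith_bound {n p : ℕ} (hn : n ≠ 0) (hp : p.Prime)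
    (hmax : ∀ q : ℕ, q.Prime → q ∣ n → q ≤ p) (hp11 : 11 ≤ p) :
    77 * n^2 ≤ 31 * (p * psiArith n) := by
  set S := n.primeFactors with hS
  have hprimes : ∀ q ∈ S, q.Prime ∧ q ≤ p := fun q hq =>
    ⟨Nat.prime_of_mem_primeFactors hq,
     hmax q (Nat.prime_of_mem_primeFactors hq) (Nat.dvd_of_mem_primeFactors hq)⟩
  have hfact : psiArith n = ∏ q ∈ S, psiArith (q ^ n.factorization q) := by
    rw [psiArith_isMultiplicative.multiplicative_factorization psiArith hn, Finsupp.prod,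
      Nat.support_factorization]
  have hself : ∏ q ∈ S, q ^ n.factorization q = n := by
    conv_rhs => rw [← Nat.factorization_prod_pow_eq_self hn]
    rw [Finsupp.prod, Nat.support_factorization]
  have hBpos : 0 < ∏ q ∈ S, (q+1) := Finset.prod_pos fun q _ => Nat.succ_pos q
  have key : (77 * n^2) * ∏ q ∈ S, (q+1) ≤ (31 * (p * psiArith n)) * ∏ q ∈ S, (q+1) := by
    calc (77 * n^2) * ∏ q ∈ S, (q+1)
        = (77 * ∏ q ∈ S, (q+1)) * n^2 := by ring
      _ ≤ (31 * (p * ∏ q ∈ S, q)) * n^2 :=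
          Nat.mul_le_mul_right _ (prime_prod_bound hp hp11 S hprimes)
      _ = 31 * p * ((∏ q ∈ S, q) * n^2) := by ring
      _ = 31 * p * ∏ q ∈ S, q ^ (2 * n.factorization q + 1) := by
          have hpow : (∏ q ∈ S, q) * n^2 = ∏ q ∈ S, q ^ (2 * n.factorization q + 1) := by
            conv_lhs => rw [← hself]
            rw [← Finset.prod_pow, ← Finset.prod_mul_distrib]
            refine Finset.prod_congr rfl fun q _ => ?_
            rw [← pow_mul, ← pow_succ']
            congr 1
            ring
          rw [hpow]
      _ ≤ 31 * p * ∏ q ∈ S, ((q+1) * psiArith (q ^ n.factorization q)) := by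
          refine Nat.mul_le_mul_left _ (Finset.prod_le_prod (fun q _ => Nat.zero_le _)
            (fun q hq => ?_))
          exact le_trans (Nat.le_succ _) (psiArith_prime_pow (hprimes q hq).1 _)
      _ = (31 * (p * psiArith n)) * ∏ q ∈ S, (q+1) := by
          rw [Finset.prod_mul_distrib, ← hfact]; ring
  exact Nat.le_of_mul_le_mul_right key hBpos

lemma sum_orderOf_cyclic {H : Type*} [Group H] [Fintype H] [IsCyclic H] :
    ∑ g : H, orderOf g = ∑ d ∈ (Fintype.card H).divisors, d * d.totient := by
  classical
  have hmaps : ∀ g ∈ Finset.univ, orderOf (g : H) ∈ (Fintype.card H).divisors :=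
    fun g _ => Nat.mem_divisors.mpr ⟨orderOf_dvd_card, Fintype.card_ne_zero⟩
  rw [← Finset.sum_fiberwise_of_maps_to hmaps (fun g : H => orderOf g)]
  refine Finset.sum_congr rfl fun d hd => ?_
  have hdvd : d ∣ Fintype.card H := (Nat.mem_divisors.mp hd).1
  have hcard : (Finset.univ.filter fun a : H => orderOf a = d).card = d.totient :=
    IsCyclic.card_orderOf_eq_totient hdvd
  calc ∑ g ∈ Finset.univ.filter (fun g : H => orderOf g = d), orderOf g
      = ∑ _g ∈ Finset.univ.filter (fun g : H => orderOf g = d), d :=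
        Finset.sum_congr rfl fun g hg => (Finset.mem_filter.mp hg).2
    _ = (Finset.univ.filter fun g : H => orderOf g = d).card * d := by
        rw [Finset.sum_const, smul_eq_mul]
    _ = d * d.totient := by rw [hcard, mul_comm]

lemma psiC_eq {n : ℕ} (hn : n ≠ 0) : psiC n = psiArith n := by
  haveI : NeZero n := ⟨hn⟩
  unfold psiC psi
  haveI : Fintype (Multiplicative (ZMod n)) := Fintype.ofFinite _
  rw [finsum_eq_sum_of_fintype, sum_orderOf_cyclic, psiArith_apply]
  congr 1
  rw [← Nat.card_eq_fintype_card]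
  congr 1
  exact (Nat.card_congr Multiplicative.toAdd).trans (Nat.card_zmod n)

/-! ### The group-theoretic key lemma -/

/-- If no Sylow `p`-subgroup of `G` is simultaneously normal and cyclic, then every
element of `G` has order at most `|G| / p`. -/
lemma key_order {G : Type*} [Group G] [Finite G] {p : ℕ} [hp : Fact p.Prime]
    (hQ : ∀ Q : Sylow p G, ¬((Q : Subgroup G).Normal ∧ IsCyclic (Q : Subgroup G)))
    (x : G) : p * orderOf x ≤ Nat.card G := by
  classical
  set n := Nat.card G with hn
  have hn0 : n ≠ 0 := Nat.card_pos.ne'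
  set d := orderOf x with hd
  have hdn : d ∣ n := orderOf_dvd_natCard x
  have hd0 : d ≠ 0 := (orderOf_pos x).ne'
  set a := n.factorization p with ha
  have hca : d.factorization p ≤ a := (Nat.factorization_le_iff_dvd hd0 hn0).mpr hdn p
  rcases lt_or_eq_of_le hca with hlt | heq
  · -- d has p-part strictly smaller than that of n, so p * d ∣ n
    have hdvd : p * d ∣ n := by
      rw [← Nat.factorization_le_iff_dvd (Nat.mul_ne_zero hp.out.ne_zero hd0) hn0]
      intro q
      rw [Nat.factorization_mul hp.out.ne_zero hd0]
      by_cases hqp : q = p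
      · subst hqp
        simp only [Finsupp.coe_add, Pi.add_apply, Nat.Prime.factorization_self hp.out]
        omega
      · have h1 : (Nat.factorization p) q = 0 := by
          rw [hp.out.factorization]
          simp [Ne.symm hqp]
        simp only [Finsupp.coe_add, Pi.add_apply, h1, zero_add]
        exact (Nat.factorization_le_iff_dvd hd0 hn0).mpr hdn q
    exact Nat.le_of_dvd (Nat.pos_of_ne_zero hn0) hdvd
  · -- d has full p-part: then x normalizes a cyclic Sylow subgroup
    set u := x ^ (d / p ^ a) with hu
    have hpad : p ^ a ∣ d := by rw [← heq]; exact Nat.ordProj_dvd d p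
    have hou : orderOf u = p ^ a := by
      rw [hu, orderOf_pow, ← hd, Nat.gcd_eq_right (Nat.div_dvd_of_dvd hpad),
        Nat.div_div_self hpad hd0]
    have hpu : IsPGroup p (Subgroup.zpowers u) :=
      IsPGroup.of_card (by rw [Nat.card_zpowers, hou])
    obtain ⟨Q, hQle⟩ := hpu.exists_le_sylow
    have hQcard : Nat.card Q = p ^ a := Q.card_eq_multiplicity
    have hEq : Subgroup.zpowers u = (Q : Subgroup G) :=
      Subgroup.eq_of_le_of_card_ge hQle (by rw [hQcard, Nat.card_zpowers, hou])
    have hQcyc : IsCyclic (Q : Subgroup G) := by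
      rw [← hEq]
      refine ⟨⟨⟨u, Subgroup.mem_zpowers u⟩, fun g => ?_⟩⟩
      obtain ⟨k, hk⟩ := g.2
      refine ⟨k, Subtype.ext ?_⟩
      rw [SubgroupClass.coe_zpow]
      exact hk
    have hcomm : Commute x u := (Commute.refl x).pow_right _
    have hconj : ∀ h ∈ Subgroup.zpowers u, x * h * x⁻¹ = h := by
      rintro _ ⟨k, rfl⟩
      rw [(hcomm.zpow_right k).eq, mul_inv_cancel_right]
    have hconj' : ∀ h ∈ Subgroup.zpowers u, x⁻¹ * h * x = h := by
      rintro _ ⟨k, rfl⟩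
      rw [((hcomm.zpow_right k).inv_left).eq, inv_mul_cancel_right]
    have hxN : x ∈ Subgroup.normalizer ((Q : Subgroup G) : Set G) := by
      rw [← hEq, Subgroup.mem_normalizer_iff]
      intro h
      constructor
      · intro hm
        rw [hconj h hm]; exact hm
      · intro hm
        have e1 : h = x * h * x⁻¹ := by
          calc h = x⁻¹ * (x * h * x⁻¹) * x := by group
            _ = x * h * x⁻¹ := hconj' _ hm
        rw [e1]; exact hm
    set N := Subgroup.normalizer ((Q : Subgroup G) : Set G) with hN
    have hdN : d ∣ Nat.card N := by
      have e2 : orderOf (⟨x, hxN⟩ : N) = d := Subgroup.orderOf_mk x hxN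
      rw [← e2]
      exact orderOf_dvd_natCard _
    have hQnotnorm : ¬ (Q : Subgroup G).Normal := fun hnorm => hQ Q ⟨hnorm, hQcyc⟩
    have hne1 : N.index ≠ 1 := by
      intro h1
      exact hQnotnorm (Subgroup.normalizer_eq_top_iff.mp (Subgroup.index_eq_one.mp h1))
    have hidx : Nat.card (Sylow p G) = N.index := Sylow.card_eq_index_normalizer Q
    have hmod : Nat.card (Sylow p G) ≡ 1 [MOD p] := card_sylow_modEq_one p G
    have hs : p + 1 ≤ N.index := by
      have hmod' : N.index % p = 1 := by
        have h1p : 1 % p = 1 := Nat.mod_eq_of_lt hp.out.one_lt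
        rw [← h1p, ← hidx]
        exact hmod
      have hdm := Nat.div_add_mod N.index p
      rcases Nat.eq_zero_or_pos (N.index / p) with h0 | hpos
      · rw [h0] at hdm
        omega
      · have : p ≤ p * (N.index / p) := Nat.le_mul_of_pos_right p hpos
        omega
    have hdleN : d ≤ Nat.card N := Nat.le_of_dvd Nat.card_pos hdN
    calc p * d ≤ (p+1) * d := Nat.mul_le_mul_right d (Nat.le_succ p)
      _ ≤ N.index * Nat.card N := Nat.mul_le_mul hs hdleN
      _ = n := Subgroup.index_mul_card N

/-- If the largest prime divisor $p$ of $|G| = n$ satisfies $p \ge 11$ and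
$\psi(G) > \frac{31}{77}\psi(C_n)$, then $G$ has a normal cyclic Sylow
$p$-subgroup. -/
theorem normal_cyclic_sylow_of_psi_gt (G : Type*) [Group G] [Finite G]
    (p : ℕ) (hp : p.Prime) (hpn : p ∣ Nat.card G)
    (hmax : ∀ q : ℕ, q.Prime → q ∣ Nat.card G → q ≤ p) (hp11 : 11 ≤ p)
    (h : (31 : ℚ) / 77 * psiC (Nat.card G) < psi G) :
    ∃ P : Sylow p G, (P : Subgroup G).Normal ∧ IsCyclic (P : Subgroup G) := by
  classical
  haveI : Fact p.Prime := ⟨hp⟩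
  obtain ⟨P⟩ : Nonempty (Sylow p G) := inferInstance
  by_cases hok : (P : Subgroup G).Normal ∧ IsCyclic (P : Subgroup G)
  · exact ⟨P, hok⟩
  exfalso
  have hQ : ∀ Q : Sylow p G, ¬((Q : Subgroup G).Normal ∧ IsCyclic (Q : Subgroup G)) := by
    rintro Q ⟨hnorm, hcyc⟩
    haveI : Unique (Sylow p G) := Sylow.unique_of_normal Q hnorm
    have hPQ : P = Q := Subsingleton.elim P Q
    exact hok (hPQ ▸ ⟨hnorm, hcyc⟩)
  set n := Nat.card G with hn
  have hn0 : n ≠ 0 := Nat.card_pos.ne'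
  have hkey : ∀ x : G, p * orderOf x ≤ n := key_order hQ
  have h1 : p * psi G ≤ n * n := by
    haveI := Fintype.ofFinite G
    unfold psi
    rw [finsum_eq_sum_of_fintype, Finset.mul_sum]
    have hcardeq : Fintype.card G = n := Nat.card_eq_fintype_card.symm
    calc ∑ g : G, p * orderOf g ≤ ∑ _g : G, n := Finset.sum_le_sum fun i _ => hkey i
      _ = Fintype.card G * n := by rw [Finset.sum_const, smul_eq_mul, Finset.card_univ]
      _ = n * n := by rw [hcardeq]
  have h2' : 77 * n^2 ≤ 31 * (p * psiC n) := by
    rw [psiC_eq hn0]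
    exact psiArith_bound hn0 hp hmax hp11
  have h3 : 31 * psiC n < 77 * psi G := by
    have hq : (31:ℚ) * psiC n < 77 * psi G := by
      rw [div_mul_eq_mul_div, div_lt_iff₀ (by norm_num : (0:ℚ) < 77)] at h
      linarith
    exact_mod_cast hq
  have : 31 * (p * psiC n) < 31 * (p * psiC n) := by
    calc 31 * (p * psiC n) = p * (31 * psiC n) := by ring
      _ < p * (77 * psi G) := mul_lt_mul_of_pos_left h3 hp.pos
      _ = 77 * (p * psi G) := by ring
      _ ≤ 77 * (n * n) := Nat.mul_le_mul_left 77 h1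
      _ = 77 * n^2 := by ring
      _ ≤ 31 * (p * psiC n) := h2'
  exact lt_irrefl _ this
end

section
/- Let G be a finite group of order n = 2^{α_1}·3^{α_2} with α_1, α_2 > 0 such that ψ(G) > (31/77)·ψ(C_n). Then G contains an element x with |G : ⟨x⟩| < 77/31·2, i.e. |G : ⟨x⟩| ≤ 4. -/
open Finset ArithmeticFunction

lemma psi_eq_sum (G : Type*) [Group G] [Fintype G] : psi G = ∑ g : G, orderOf g :=
  finsum_eq_sum_of_fintype _

lemma psiC_eq_s15 (n : ℕ) (hn : n ≠ 0) :
    psiC n = ∑ d ∈ n.divisors, d * d.totient := by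
  have : NeZero n := ⟨hn⟩
  rw [psiC, psi_eq_sum]
  rw [← Finset.sum_fiberwise_of_maps_to (g := fun g : Multiplicative (ZMod n) => orderOf g)
    (t := n.divisors) (fun g _ => Nat.mem_divisors.mpr ⟨by
      simpa using orderOf_dvd_card (x := g), hn⟩)]
  refine Finset.sum_congr rfl fun d hd => ?_
  have hcard : #{g : Multiplicative (ZMod n) | orderOf g = d} = d.totient := by
    apply IsCyclic.card_orderOf_eq_totient
    simpa using (Nat.mem_divisors.mp hd).1
  calc ∑ g ∈ Finset.univ.filter (fun g : Multiplicative (ZMod n) => orderOf g = d), orderOf g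
      = ∑ g ∈ Finset.univ.filter (fun g : Multiplicative (ZMod n) => orderOf g = d), d :=
        Finset.sum_congr rfl fun g hg => (Finset.mem_filter.mp hg).2
    _ = _ := by rw [Finset.sum_const, smul_eq_mul, hcard, mul_comm]

noncomputable def Fdphi : ArithmeticFunction ℕ := ⟨fun d => d * d.totient, by simp⟩

lemma Fdphi_mult : Fdphi.IsMultiplicative := by
  constructor
  · simp [Fdphi]
  · intro m n h
    simp only [Fdphi, ArithmeticFunction.coe_mk]
    rw [Nat.totient_mul h]; ring

lemma sum_dphi_mul {m n : ℕ} (h : m.Coprime n) :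
    ∑ d ∈ (m * n).divisors, d * d.totient =
      (∑ d ∈ m.divisors, d * d.totient) * ∑ d ∈ n.divisors, d * d.totient := by
  have := (isMultiplicative_zeta.mul Fdphi_mult).map_mul_of_coprime h
  rw [zeta_mul_apply, zeta_mul_apply, zeta_mul_apply] at this
  simp only [zeta_mul_apply, Fdphi, ArithmeticFunction.coe_mk] at this
  exact this

lemma four_pow_eq (a : ℕ) : (4 : ℕ) ^ a = 2 ^ a * 2 ^ a := by
  rw [show (4:ℕ) = 2 * 2 from rfl, mul_pow]

lemma nine_pow_eq (b : ℕ) : (9 : ℕ) ^ b = 3 ^ b * 3 ^ b := by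
  rw [show (9:ℕ) = 3 * 3 from rfl, mul_pow]

lemma sum_dphi_two (a : ℕ) : 2 * 4 ^ a ≤ 3 * ∑ d ∈ (2 ^ a).divisors, d * d.totient := by
  rw [Nat.sum_divisors_prime_pow Nat.prime_two]
  induction a with
  | zero => simp
  | succ a ih =>
    rw [Finset.sum_range_succ, Nat.totient_prime_pow Nat.prime_two (by omega)]
    have h : 2 ^ (a + 1) * (2 ^ (a + 1 - 1) * (2 - 1)) = 2 * 4 ^ a := by
      simp [pow_succ, four_pow_eq]; ring
    rw [h]
    calc 2 * 4 ^ (a + 1) = 2 * 4 ^ a + 3 * (2 * 4 ^ a) := by ring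
    _ ≤ 3 * ∑ i ∈ Finset.range (a + 1), 2 ^ i * (2 ^ i).totient + 3 * (2 * 4 ^ a) := by
        omega
    _ = _ := by ring

lemma sum_dphi_three (b : ℕ) : 3 * 9 ^ b ≤ 4 * ∑ d ∈ (3 ^ b).divisors, d * d.totient := by
  rw [Nat.sum_divisors_prime_pow Nat.prime_three]
  induction b with
  | zero => simp
  | succ b ih =>
    rw [Finset.sum_range_succ, Nat.totient_prime_pow Nat.prime_three (by omega)]
    have h : 3 ^ (b + 1) * (3 ^ (b + 1 - 1) * (3 - 1)) = 6 * 9 ^ b := by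
      simp [pow_succ, nine_pow_eq]; ring
    rw [h]
    calc 3 * 9 ^ (b + 1) = 3 * 9 ^ b + 4 * (6 * 9 ^ b) := by ring
    _ ≤ 4 * ∑ i ∈ Finset.range (b + 1), 3 ^ i * (3 ^ i).totient + 4 * (6 * 9 ^ b) := by
        omega
    _ = _ := by ring

lemma sq_le_two_sum (a b : ℕ) :
    (2 ^ a * 3 ^ b) ^ 2 ≤ 2 * ∑ d ∈ (2 ^ a * 3 ^ b).divisors, d * d.totient := by
  have hcop : Nat.Coprime (2 ^ a) (3 ^ b) := Nat.Coprime.pow a b (by norm_num)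
  rw [sum_dphi_mul hcop]
  set S2 := ∑ d ∈ (2 ^ a).divisors, d * d.totient with hS2
  set S3 := ∑ d ∈ (3 ^ b).divisors, d * d.totient with hS3
  have h2 := sum_dphi_two a
  have h3 := sum_dphi_three b
  have h12 : (2 * 4 ^ a) * (3 * 9 ^ b) ≤ 12 * (S2 * S3) :=
    calc (2 * 4 ^ a) * (3 * 9 ^ b) ≤ (3 * S2) * (4 * S3) := Nat.mul_le_mul h2 h3
    _ = 12 * (S2 * S3) := by ring
  have hsq : (2 ^ a * 3 ^ b) ^ 2 * 6 = (2 * 4 ^ a) * (3 * 9 ^ b) := by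
    rw [four_pow_eq, nine_pow_eq]; ring
  nlinarith [hsq, h12]

/-- If $|G| = 2^{a} 3^{b}$ with $a, b > 0$ and $\psi(G) > \frac{31}{77}\psi(C_n)$,
then $G$ has an element $x$ with $|G : \langle x\rangle| < \frac{77}{31}\cdot 2$,
i.e. $|G : \langle x\rangle| \le 4$. -/
theorem exists_small_index_cyclic_of_card_two_three (G : Type*) [Group G] [Finite G]
    (a b : ℕ) (ha : 0 < a) (hb : 0 < b) (hcard : Nat.card G = 2 ^ a * 3 ^ b)
    (h : (31 : ℚ) / 77 * psiC (Nat.card G) < psi G) :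
    ∃ x : G, ((Subgroup.zpowers x).index : ℚ) < 77 / 31 * 2 ∧
      (Subgroup.zpowers x).index ≤ 4 := by
  cases nonempty_fintype G
  set n := Nat.card G with hn
  have hn0 : n ≠ 0 := by rw [hcard]; positivity
  -- an element of maximal order
  obtain ⟨x, -, hx⟩ := Finset.exists_max_image (Finset.univ : Finset G) orderOf ⟨1, Finset.mem_univ 1⟩
  set M := orderOf x with hM
  have hM0 : 0 < M := orderOf_pos x
  -- ψ(G) ≤ n * M
  have hpsi_le : psi G ≤ n * M := by
    rw [psi_eq_sum]
    calc ∑ g : G, orderOf g ≤ ∑ _g : G, M :=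
          Finset.sum_le_sum fun g _ => hx g (Finset.mem_univ g)
      _ = Fintype.card G * M := by rw [Finset.sum_const, smul_eq_mul, Finset.card_univ]
      _ = n * M := by rw [hn, Nat.card_eq_fintype_card]
  -- n² ≤ 2 ψC(n)
  have hpsiC : n ^ 2 ≤ 2 * psiC n := by
    rw [psiC_eq_s15 n hn0, hcard]
    exact sq_le_two_sum a b
  -- from the hypothesis: 31 * psiC n < 77 * psi G
  have hq : 31 * psiC n < 77 * psi G := by
    have : (31 : ℚ) * psiC n < 77 * psi G := by
      have h77 : (0:ℚ) < 77 := by norm_num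
      nlinarith [h]
    exact_mod_cast this
  -- combine: 31 * n^2 < 154 * n * M
  have hkey : 31 * n ^ 2 < 154 * (n * M) := by
    calc 31 * n ^ 2 ≤ 31 * (2 * psiC n) := Nat.mul_le_mul_left _ hpsiC
      _ = 2 * (31 * psiC n) := by ring
      _ < 2 * (77 * psi G) := by omega
      _ ≤ 154 * (n * M) := by
          have := Nat.mul_le_mul_left 154 hpsi_le
          omega
  have hnM : 31 * n < 154 * M := by
    have hn0' : 0 < n := Nat.pos_of_ne_zero hn0
    have : (31 * n) * n < (154 * M) * n := by
      calc (31 * n) * n = 31 * n ^ 2 := by ring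
        _ < 154 * (n * M) := hkey
        _ = (154 * M) * n := by ring
    exact Nat.lt_of_mul_lt_mul_right this
  -- index * M = n
  set i := (Subgroup.zpowers x).index with hi
  have hiM : i * M = n := by
    rw [hi, hM, ← Nat.card_zpowers]
    exact Subgroup.index_mul_card _
  have hilt : 31 * i < 154 := by
    have : 31 * (i * M) < 154 * M := by rw [hiM]; exact hnM
    by_contra hcon
    push_neg at hcon
    have : 154 * M ≤ 31 * i * M := Nat.mul_le_mul_right M hcon
    nlinarith [this, hM0]
  have hile : i ≤ 4 := by omega
  refine ⟨x, ?_, hile⟩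
  have : (i : ℚ) ≤ 4 := by exact_mod_cast hile
  linarith [this]
end
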